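/- Suppose the letter x_n occurs at some earlier position in the directive word. Then h_{n-1} is a prefix of u_n and \bar{h_{n-1}} (the reversal of h_{n-1}) is a suffix of u_n. -/

import Mathlib

variable {A : Type*} [DecidableEq A]

/-- `psiW a` is the morphism with `ψ_a(a) = a` and `ψ_a(x) = ax` for `x ≠ a`. -/
def psiW (a : A) (w : List A) : List A :=
  w.flatMap (fun b => if b = a then [a] else [a, b])

/-- `muW x n = ψ_{x 1} ∘ ⋯ ∘ ψ_{x n}`. -/
def muW (x : ℕ → A) : ℕ → List A → List A
  | 0 => id
  | n + 1 => fun w => muW x n (psiW (x (n + 1)) w)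

/-- `hW x n = μ_n (x_{n+1})`. -/
def hW (x : ℕ → A) (n : ℕ) : List A := muW x n [x (n + 1)]

/-- `p` is the palindromic right-closure of `w`: the shortest palindrome having `w`
as a prefix. -/
def IsPalClosure (w p : List A) : Prop :=
  w <+: p ∧ p.reverse = p ∧
    ∀ q : List A, w <+: q → q.reverse = q → p.length ≤ q.length

/-- The finite word `w` is a prefix of the infinite word `s`. -/
def PrefInf (w : List A) (s : ℕ → A) : Prop :=
  ∀ i : ℕ, ∀ h : i < w.length, w[i] = s i

/-- Number of occurrences (positions) of `w` as a factor of `v`. -/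
def occ (w v : List A) : ℕ :=
  (List.range (v.length + 1)).countP
    (fun i => decide (i + w.length ≤ v.length ∧ (v.drop i).take w.length = w))

/-- `cat z k = z 1 ++ z 2 ++ ⋯ ++ z k`. -/
def cat (z : ℕ → List A) (k : ℕ) : List A := ((List.range' 1 k).map z).flatten

/-- `z` is the Ziv-Lempel factorization of the infinite word `s`: each `z m` is
the shortest prefix of `z m · z (m+1) ⋯` occurring only once in `z 1 ⋯ z m`. -/
def IsZFact (s : ℕ → A) (z : ℕ → List A) : Prop :=
  ∀ m : ℕ, 1 ≤ m → z m ≠ [] ∧ PrefInf (cat z m) s ∧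
    occ (z m) (cat z m) = 1 ∧
    ∀ p : List A, p <+: z m → p ≠ z m → 2 ≤ occ p (cat z m)

/-- `c` is the Crochemore factorization of the infinite word `s`: each `c m` is
either a fresh letter, or the longest prefix of `c m · c (m+1) ⋯` occurring
twice in `c 1 ⋯ c m`. -/
def IsCFact (s : ℕ → A) (c : ℕ → List A) : Prop :=
  ∀ m : ℕ, 1 ≤ m → c m ≠ [] ∧ PrefInf (cat c m) s ∧
    ((∃ a : A, c m = [a] ∧ a ∉ cat c (m - 1)) ∨
      (2 ≤ occ (c m) (cat c m) ∧
        occ (c m ++ [s (cat c m).length]) (cat c m ++ [s (cat c m).length]) = 1))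

/-!
Write `Pal` for iterated palindromic closure. Justin's recursion `Pal(aw) = ψ_a(Pal w) a`
agrees with it because `ψ_a` commutes with palindromic closure: if `r = (vb)⁺` then
`ψ_a(r) a = (ψ_a(v) a b)⁺`. This is a length count. A palindrome extending `W` has length at
least `2|W| - |q|` for some palindromic suffix `q` of `W`, and a nonempty palindromic suffix `q`
of `ψ_a(v) a b` is `ψ_a(p) a` (if `b = a`) or satisfies `a q = ψ_a(p)` (if `b ≠ a`) for a
palindromic suffix `p` of `vb`; the palindrome `t p t̃` extending `vb = t p` then bounds
`|ψ_a(r)|`. Hence `u_n = Pal(x_1 ⋯ x_{n-1})`.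

For the prefix property induct on `w = x_1 ⋯ x_{n-1}`: `μ_{aw}(c) = ψ_a(μ_w(c))` and `ψ_a`
preserves prefixes, while if `c` does not occur in `w` then `μ_w(c) = Pal(w) c`, so that
`μ_{cw}(c) = Pal(cw)`. The reversed statement follows since `u_n` is a palindrome.
-/

section Palindrome

variable {α : Type*}

theorem eq_append_reverse_take_of_reverse_eq {w p : List α} (hwp : w <+: p)
    (hp : p.reverse = p) (hlen : p.length ≤ 2 * w.length) :
    p = w ++ (w.take (p.length - w.length)).reverse := by
  obtain ⟨e, rfl⟩ := hwp
  have he : e.length ≤ w.length := by simp only [List.length_append] at hlen; omega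
  have hrev : e.reverse = w.take e.length :=
    calc e.reverse = (w ++ e).reverse.take e.length := by simp
      _ = w.take e.length := by rw [hp, List.take_append_of_le_length he]
  simp [← hrev]

theorem IsPalClosure.length_le_two_mul {w r : List α} (h : IsPalClosure w r) :
    r.length ≤ 2 * w.length := by
  simpa [two_mul] using h.2.2 (w ++ w.reverse) (List.prefix_append _ _) (by simp)

theorem IsPalClosure.unique {w r r' : List α} (h : IsPalClosure w r)
    (h' : IsPalClosure w r') : r = r' := by
  have hlen : r.length = r'.length := (h.2.2 r' h'.1 h'.2.1).antisymm (h'.2.2 r h.1 h.2.1)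
  rw [eq_append_reverse_take_of_reverse_eq h.1 h.2.1 h.length_le_two_mul,
    eq_append_reverse_take_of_reverse_eq h'.1 h'.2.1 h'.length_le_two_mul, hlen]

theorem isPalClosure_of_forall_suffix {w r : List α} (hwr : w <+: r) (hr : r.reverse = r)
    (h : ∀ q, q <:+ w → q.reverse = q → r.length + q.length ≤ 2 * w.length) :
    IsPalClosure w r := by
  refine ⟨hwr, hr, fun s hws hs => ?_⟩
  have hw := hws.length_le
  by_cases hlen : s.length ≤ 2 * w.length
  · have hs' := eq_append_reverse_take_of_reverse_eq hws hs hlen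
    have hq : (w.drop (s.length - w.length)).reverse = w.drop (s.length - w.length) := by
      have hsplit := List.take_append_drop (s.length - w.length) w
      set y := w.take (s.length - w.length)
      have : (y ++ w.drop (s.length - w.length) ++ y.reverse).reverse =
          y ++ w.drop (s.length - w.length) ++ y.reverse := by
        rw [hsplit, ← hs', hs]
      simpa using this
    have := h _ (List.drop_suffix _ w) hq
    simp only [List.length_drop] at this
    omega
  · have := h [] List.nil_suffix rfl
    simp only [List.length_nil, add_zero] at this
    omega

end Palindrome

section Psi

variable (a : A)

@[simp] theorem psiW_nil : psiW a [] = [] := rfl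

@[simp] theorem psiW_cons (c : A) (l : List A) :
    psiW a (c :: l) = (if c = a then [a] else [a, c]) ++ psiW a l :=
  List.flatMap_cons ..

@[simp] theorem psiW_append (l l' : List A) : psiW a (l ++ l') = psiW a l ++ psiW a l' :=
  List.flatMap_append ..

@[simp] theorem psiW_eq_nil {l : List A} : psiW a l = [] ↔ l = [] := by
  cases l with
  | nil => simp
  | cons c l => by_cases hc : c = a <;> simp [hc]

theorem exists_psiW_eq_cons {l : List A} (hl : l ≠ []) : ∃ z, psiW a l = a :: z := by
  obtain ⟨c, l, rfl⟩ := List.exists_cons_of_ne_nil hl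
  by_cases hc : c = a <;> simp [hc]

theorem psiW_ne_cons_of_ne {c : A} (hc : c ≠ a) (l z : List A) : psiW a l ≠ c :: z := by
  rcases eq_or_ne l [] with rfl | hl
  · simp
  · obtain ⟨z', hz'⟩ := exists_psiW_eq_cons a hl
    simp [hz', Ne.symm hc]

theorem psiW_injective : Function.Injective (psiW a) := by
  intro l l' h
  induction l generalizing l' with
  | nil => simpa using h.symm
  | cons c l ih =>
    cases l' with
    | nil => by_cases hc : c = a <;> simp [hc] at h
    | cons d l' =>
      by_cases hc : c = a <;> by_cases hd : d = a <;> simp [hc, hd] at h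
      · rw [hc, hd, ih h]
      · exact absurd h (psiW_ne_cons_of_ne a hd _ _)
      · exact absurd h.symm (psiW_ne_cons_of_ne a hc _ _)
      · rw [h.1, ih h.2]

theorem reverse_psiW_append_singleton (l : List A) :
    (psiW a l ++ [a]).reverse = psiW a l.reverse ++ [a] := by
  induction l with
  | nil => rfl
  | cons c l ih =>
    rw [psiW_cons, List.reverse_cons, psiW_append, List.append_assoc, List.reverse_append, ih]
    by_cases hc : c = a <;> simp [hc]

theorem length_psiW_reverse (l : List A) : (psiW a l.reverse).length = (psiW a l).length := by
  simpa using (congrArg List.length (reverse_psiW_append_singleton a l)).symm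

theorem reverse_psiW_append_singleton_eq_iff {l : List A} :
    (psiW a l ++ [a]).reverse = psiW a l ++ [a] ↔ l.reverse = l := by
  rw [reverse_psiW_append_singleton, List.append_left_inj, (psiW_injective a).eq_iff]

theorem psiW_prefix_psiW {l l' : List A} (h : l <+: l') : psiW a l <+: psiW a l' := by
  obtain ⟨t, rfl⟩ := h
  exact ⟨psiW a t, (psiW_append a l t).symm⟩

theorem exists_of_suffix_psiW {s w : List A} (h : s <:+ psiW a w) :
    (∃ t, t <:+ w ∧ s = psiW a t) ∨ ∃ c t, c ≠ a ∧ c :: t <:+ w ∧ s = c :: psiW a t := by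
  induction w with
  | nil => exact .inl ⟨[], List.nil_suffix, List.eq_nil_of_suffix_nil h⟩
  | cons d w ih =>
    obtain hs | ⟨hd, hs⟩ | h' :
        s = psiW a (d :: w) ∨ (d ≠ a ∧ s = d :: psiW a w) ∨ s <:+ psiW a w := by
      by_cases hd : d = a
      · simpa [hd, List.suffix_cons_iff] using h
      · simpa [hd, List.suffix_cons_iff, or_assoc] using h
    · exact .inl ⟨d :: w, List.suffix_refl _, hs⟩
    · exact .inr ⟨d, w, hd, List.suffix_refl _, hs⟩
    · rcases ih h' with ⟨t, ht, hs⟩ | ⟨c, t, hc, ht, hs⟩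
      · exact .inl ⟨t, ht.trans (List.suffix_cons d w), hs⟩
      · exact .inr ⟨c, t, hc, ht.trans (List.suffix_cons d w), hs⟩

theorem IsPalClosure.length_psiW_add_le {w r p : List A} (hr : IsPalClosure w r)
    (hpw : p <:+ w) (hp : p.reverse = p) :
    (psiW a r).length + (psiW a p).length ≤ 2 * (psiW a w).length := by
  obtain ⟨t, rfl⟩ := hpw
  have hrC : r.length ≤ (t ++ p ++ t.reverse).length :=
    hr.2.2 _ (List.prefix_append _ _) (by simp [hp])
  have hk : r.length - (t ++ p).length ≤ t.length := by
    simp only [List.append_assoc, List.length_append, List.length_reverse] at hrC ⊢; omega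
  have htake : (t ++ p).take (r.length - (t ++ p).length) <+: t := by
    rw [List.take_append_of_le_length hk]
    exact List.take_prefix _ t
  have := (psiW_prefix_psiW a htake).length_le
  rw [eq_append_reverse_take_of_reverse_eq hr.1 hr.2.1 hr.length_le_two_mul]
  simp only [psiW_append, List.length_append, length_psiW_reverse] at this ⊢
  omega

theorem IsPalClosure.psiW_append_singleton {w r : List A} (hr : IsPalClosure w r) :
    IsPalClosure (psiW a w ++ [a]) (psiW a r ++ [a]) := by
  refine isPalClosure_of_forall_suffix ?_ ((reverse_psiW_append_singleton_eq_iff a).2 hr.2.1)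
    fun q hq hqpal => ?_
  · obtain ⟨t, rfl⟩ := hr.1
    rcases eq_or_ne t [] with rfl | ht
    · simp
    · obtain ⟨z, hz⟩ := exists_psiW_eq_cons a ht
      exact ⟨z ++ [a], by simp [hz]⟩
  rcases List.suffix_concat_iff.1 hq with rfl | ⟨q₀, rfl, hq₀⟩
  · have := hr.length_psiW_add_le a List.nil_suffix rfl
    simp only [psiW_nil, List.length_append, List.length_nil, List.length_singleton] at this ⊢
    omega
  rcases exists_of_suffix_psiW a hq₀ with ⟨t, ht, rfl⟩ | ⟨c, t, hc, -, rfl⟩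
  · have := hr.length_psiW_add_le a ht ((reverse_psiW_append_singleton_eq_iff a).1 hqpal)
    simp only [List.length_append, List.length_singleton]
    omega
  · simp only [List.cons_append, List.reverse_cons, List.reverse_append, List.reverse_nil,
      List.nil_append, List.cons.injEq] at hqpal
    exact absurd hqpal.1.symm hc

theorem IsPalClosure.psiW_append_singleton_of_ne {v r : List A} {b : A} (hb : b ≠ a)
    (hr : IsPalClosure (v ++ [b]) r) :
    IsPalClosure (psiW a (v ++ [b])) (psiW a r ++ [a]) := by
  refine isPalClosure_of_forall_suffix ((psiW_prefix_psiW a hr.1).trans (List.prefix_append _ _))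
    ((reverse_psiW_append_singleton_eq_iff a).2 hr.2.1) fun q hq hqpal => ?_
  obtain ⟨p, hp, hppal, hlen⟩ :
      ∃ p, p <:+ v ++ [b] ∧ p.reverse = p ∧ q.length + 1 ≤ (psiW a p).length := by
    rcases exists_of_suffix_psiW a hq with ⟨t, ht, rfl⟩ | ⟨c, t, hc, ht, rfl⟩
    · rcases eq_or_ne t [] with rfl | ht₀
      · exact ⟨[b], List.suffix_append _ _, rfl, by simp [hb]⟩
      obtain ⟨z, hz⟩ := exists_psiW_eq_cons a ht₀
      have hq' : psiW a t <:+ (psiW a v ++ [a]) ++ [b] := by simpa [hb] using hq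
      rcases List.suffix_concat_iff.1 hq' with h0 | ⟨q₀, hq₀, -⟩
      · exact absurd ((psiW_eq_nil a).1 h0) ht₀
      · have : b :: q₀.reverse = a :: z := by rw [← hz, ← hqpal, hq₀]; simp
        exact absurd (List.cons.inj this).1 hb
    · refine ⟨c :: t, ht, (reverse_psiW_append_singleton_eq_iff a).1 ?_, by simp [hc]⟩
      simpa [hc] using congrArg (· ++ [a]) hqpal
  have := hr.length_psiW_add_le a hp hppal
  simp only [List.length_append, List.length_singleton]
  omega

end Psi

/-- `Pal`, defined by Justin's recursion rather than by iterated palindromic closure. -/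
def pal : List A → List A
  | [] => []
  | a :: l => psiW a (pal l) ++ [a]

theorem isPalClosure_pal_append_singleton (l : List A) (b : A) :
    IsPalClosure (pal l ++ [b]) (pal (l ++ [b])) := by
  induction l with
  | nil => exact ⟨List.prefix_refl _, rfl, fun q hq _ => by simpa [pal] using hq.length_le⟩
  | cons a l ih =>
    by_cases hb : b = a
    · subst hb
      simpa [pal] using ih.psiW_append_singleton b
    · simpa [pal, hb] using ih.psiW_append_singleton_of_ne a hb

theorem foldr_psiW_singleton_of_not_mem {b : A} {l : List A} (hb : b ∉ l) :
    l.foldr psiW [b] = pal l ++ [b] := by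
  induction l with
  | nil => rfl
  | cons a l ih =>
    rw [List.mem_cons, not_or] at hb
    simp [pal, ih hb.2, hb.1]

theorem foldr_psiW_singleton_prefix_pal {b : A} {l : List A} (hb : b ∈ l) :
    l.foldr psiW [b] <+: pal l := by
  induction l with
  | nil => simp at hb
  | cons a l ih =>
    by_cases hbl : b ∈ l
    · exact (psiW_prefix_psiW a (ih hbl)).trans (List.prefix_append _ _)
    · obtain rfl : b = a := by simpa [hbl] using hb
      simp [pal, foldr_psiW_singleton_of_not_mem hbl]

def dirPrefix {α : Type*} (x : ℕ → α) (n : ℕ) : List α := (List.range' 1 n).map x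

theorem dirPrefix_succ {α : Type*} (x : ℕ → α) (n : ℕ) :
    dirPrefix x (n + 1) = dirPrefix x n ++ [x (n + 1)] := by
  simp [dirPrefix, List.range'_concat, add_comm]

theorem muW_eq_foldr (x : ℕ → A) (n : ℕ) (w : List A) :
    muW x n w = (dirPrefix x n).foldr psiW w := by
  induction n generalizing w with
  | zero => rfl
  | succ n ih => simp [muW, ih, dirPrefix_succ]

theorem eq_pal_dirPrefix {x : ℕ → A} {u : ℕ → List A} (hu1 : u 1 = [])
    (hu : ∀ n, 1 ≤ n → IsPalClosure (u n ++ [x n]) (u (n + 1))) (n : ℕ) :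
    u (n + 1) = pal (dirPrefix x n) := by
  induction n with
  | zero => exact hu1
  | succ n ih =>
    have h := hu (n + 1) (by omega)
    rw [ih] at h
    rw [dirPrefix_succ]
    exact h.unique (isPalClosure_pal_append_singleton _ _)

theorem h_prefix_u_general (x : ℕ → A) (u : ℕ → List A) (hu1 : u 1 = [])
    (hu : ∀ n : ℕ, 1 ≤ n → IsPalClosure (u n ++ [x n]) (u (n + 1))) (n : ℕ)
    (hocc : ∃ i : ℕ, 1 ≤ i ∧ i < n ∧ x i = x n) :
    hW x (n - 1) <+: u n ∧ (hW x (n - 1)).reverse <:+ u n := by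
  obtain ⟨i, hi1, hin, hxi⟩ := hocc
  obtain ⟨m, rfl⟩ : ∃ m, n = m + 1 := ⟨n - 1, by omega⟩
  have hmem : x (m + 1) ∈ dirPrefix x m :=
    List.mem_map.2 ⟨i, List.mem_range'_1.2 ⟨hi1, by omega⟩, hxi⟩
  have hprefix : hW x m <+: u (m + 1) := by
    rw [hW, muW_eq_foldr, eq_pal_dirPrefix hu1 hu]
    exact foldr_psiW_singleton_prefix_pal hmem
  have hpal : (u (m + 1)).reverse = u (m + 1) := (hu m (by omega)).2.1
  rw [Nat.add_sub_cancel]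
  exact ⟨hprefix, hpal ▸ List.reverse_suffix.2 hprefix⟩

theorem h_prefix_u (x : ℕ → A) (u : ℕ → List A) (hu1 : u 1 = [])
    (hu : ∀ n : ℕ, 1 ≤ n → IsPalClosure (u n ++ [x n]) (u (n + 1))) (n : ℕ) (hn : 1 ≤ n)
    (hocc : ∃ i : ℕ, 1 ≤ i ∧ i < n ∧ x i = x n) :
    hW x (n - 1) <+: u n ∧ (hW x (n - 1)).reverse <:+ u n :=
  h_prefix_u_general x u hu1 hu n hocc
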